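/- arXiv:2110.05326 — 3 statements merged into one kernel-verified Lean document; each statement's English description precedes it below -/
import Mathlib

section
/- Let f : ℂ → ℂ be smooth with exponential decay and k a positive integer. If f has the Taylor expansion f(z, z̄) = Σ_{a=0}^{k} Σ_{b=0}^{a} f_{ab} z^{a−b} z̄^{b} + O(|z|^{k+1}) at the origin, then lim_{r→0⁺} (1/(2πi)) ∮_{|z|=r} f(z,z̄)²/z^k dz = Σ_{a=0}^{k−1} f_{a0} f_{(k−1−a)0}. -/
open scoped Real
open Finset

lemma myCircleIntegral_finset_sum {ι : Type*} (s : Finset ι) (g : ι → ℂ → ℂ) (c : ℂ) (R : ℝ)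
    (h : ∀ i ∈ s, CircleIntegrable (g i) c R) :
    (∮ z in C(c, R), ∑ i ∈ s, g i z) = ∑ i ∈ s, ∮ z in C(c, R), g i z := by
  simp only [circleIntegral, smul_sum]
  exact intervalIntegral.integral_finset_sum fun i hi => (circleIntegrable_iff R).1 (h i hi)

lemma myCirc_zpow (r : ℝ) (hr : 0 < r) (n : ℤ) :
    (∮ z in C(0, r), z ^ n) = if n = -1 then 2 * (π:ℂ) * Complex.I else 0 := by
  split_ifs with h
  · subst h
    have := circleIntegral.integral_sub_inv_of_mem_ball
      (c := (0:ℂ)) (w := 0) (R := r) (by simpa using hr)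
    simpa [zpow_neg_one] using this
  · simpa using circleIntegral.integral_sub_zpow_of_ne h 0 0 r

lemma myCircleIntegrable_zpow (r : ℝ) (hr : 0 < r) (c : ℂ) (n : ℤ) :
    CircleIntegrable (fun z : ℂ => c * z ^ n) 0 r := by
  refine ContinuousOn.circleIntegrable hr.le ?_
  intro z hz
  have hz0 : z ≠ 0 := by
    simp only [Metric.mem_sphere, dist_zero_right] at hz
    intro h; rw [h] at hz; simp at hz; exact hr.ne' hz.symm
  exact (continuousAt_const.mul (continuousAt_zpow₀ z n (Or.inl hz0))).continuousWithinAt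

lemma myMon (r : ℝ) (z : ℂ) (hz0 : z ≠ 0) (hz : ‖z‖ = r) (a b : ℕ) (hb : b ≤ a) (c : ℂ) :
    c * z ^ (a - b) * (starRingEnd ℂ) z ^ b = c * (r:ℂ) ^ (2*b) * z ^ ((a:ℤ) - 2*b) := by
  have hcon : (starRingEnd ℂ) z = (r:ℂ)^2 / z := by
    rw [eq_div_iff hz0, mul_comm, Complex.mul_conj, ← hz]
    norm_cast
    rw [Complex.normSq_eq_norm_sq]
  rw [hcon, div_pow, div_eq_mul_inv, ← pow_mul,
    show (a:ℤ) - 2*b = ((a - b : ℕ):ℤ) - (b:ℕ) by omega, zpow_sub₀ hz0, zpow_natCast,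
    zpow_natCast]
  field_simp

lemma myMulZpow (z : ℂ) (hz : z ≠ 0) (c1 c2 : ℂ) (m m' : ℤ) (k : ℕ) :
    (c1 * z ^ m) * (c2 * z ^ m') / z ^ k = (c1 * c2) * z ^ (m + m' - k) := by
  rw [zpow_sub₀ hz, zpow_add₀ hz, zpow_natCast]
  field_simp

noncomputable def Aset (k : ℕ) : Finset ((_ : ℕ) × ℕ) := (Finset.range (k+1)).sigma fun a => Finset.range (a+1)

noncomputable def Pfun (F : ℕ → ℕ → ℂ) (k : ℕ) (z : ℂ) : ℂ :=
  ∑ p ∈ Aset k, F p.1 p.2 * z ^ (p.1 - p.2) * (starRingEnd ℂ) z ^ p.2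

noncomputable def Sfun (F : ℕ → ℕ → ℂ) (k : ℕ) (r : ℝ) : ℂ :=
  ∑ pq ∈ Aset k ×ˢ Aset k,
    F pq.1.1 pq.1.2 * F pq.2.1 pq.2.2 * (r:ℂ) ^ (2*(pq.1.2+pq.2.2)) *
      (if (pq.1.1:ℤ) + pq.2.1 - 2*(pq.1.2+pq.2.2) - k = -1 then 1 else 0)

lemma Pfun_eq (F : ℕ → ℕ → ℂ) (k : ℕ) (z : ℂ) :
    Pfun F k z = ∑ a ∈ Finset.range (k + 1), ∑ b ∈ Finset.range (a + 1),
      F a b * z ^ (a - b) * (starRingEnd ℂ z) ^ b := by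
  rw [Pfun, Aset, Finset.sum_sigma]

lemma L1 (F : ℕ → ℕ → ℂ) (k : ℕ) (r : ℝ) (hr : 0 < r) :
    (∮ z in C(0, r), Pfun F k z ^ 2 / z ^ k) = (2 * (π:ℂ) * Complex.I) * Sfun F k r := by
  have hEq : Set.EqOn (fun z => Pfun F k z ^ 2 / z ^ k)
      (fun z => ∑ pq ∈ Aset k ×ˢ Aset k,
        (F pq.1.1 pq.1.2 * F pq.2.1 pq.2.2 * (r:ℂ) ^ (2*(pq.1.2+pq.2.2))) *
          z ^ ((pq.1.1:ℤ) + pq.2.1 - 2*(pq.1.2+pq.2.2) - k)) (Metric.sphere 0 r) := by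
    intro z hz
    have hzr : ‖z‖ = r := by simpa using hz
    have hz0 : z ≠ 0 := by
      intro h; rw [h] at hzr; simp at hzr; exact hr.ne' hzr.symm
    simp only [Pfun, sq, Finset.sum_mul_sum, Finset.sum_product, Finset.sum_div]
    refine Finset.sum_congr rfl fun p hp => Finset.sum_congr rfl fun q hq => ?_
    have hp2 : p.2 ≤ p.1 := by
      have := (Finset.mem_sigma.1 hp).2; simpa [Nat.lt_succ_iff] using this
    have hq2 : q.2 ≤ q.1 := by
      have := (Finset.mem_sigma.1 hq).2; simpa [Nat.lt_succ_iff] using this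
    rw [myMon r z hz0 hzr p.1 p.2 hp2, myMon r z hz0 hzr q.1 q.2 hq2,
      myMulZpow z hz0 _ _ _ _ k]
    rw [show ((p.1:ℤ) - 2*p.2) + ((q.1:ℤ) - 2*q.2) - k
        = (p.1:ℤ) + q.1 - 2*(p.2+q.2) - k by push_cast; ring]
    rw [show 2*(p.2+q.2) = 2*p.2 + 2*q.2 by ring, pow_add]
    ring
  rw [circleIntegral.integral_congr hr.le hEq,
    myCircleIntegral_finset_sum _ _ 0 r (fun pq _ => myCircleIntegrable_zpow r hr _ _)]
  rw [Sfun, Finset.mul_sum]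
  refine Finset.sum_congr rfl fun pq _ => ?_
  rw [circleIntegral.integral_const_mul, myCirc_zpow r hr]
  split_ifs <;> ring

lemma L3 (F : ℕ → ℕ → ℂ) (k : ℕ) (hk : 0 < k) :
    Sfun F k 0 = ∑ a ∈ Finset.range k, F a 0 * F (k - 1 - a) 0 := by
  have helper : ∀ (s : Finset ℕ) (j : ℕ), j ∈ s → ∀ (Pr : Prop) [Decidable Pr] (X : ℕ → ℂ),
      (∑ i ∈ s, if i = j ∧ Pr then X i else 0) = if Pr then X j else 0 := by
    intro s j hj Pr _ X
    rw [Finset.sum_eq_single_of_mem j hj]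
    · simp
    · intro b _ hb; simp [hb]
  rw [Sfun, Finset.sum_product, Aset]
  have hterm : ∀ a b a' b' : ℕ,
      F a b * F a' b' * (0:ℂ) ^ (2*(b+b')) *
        (if (a:ℤ) + a' - 2*(b+b') - k = -1 then 1 else 0)
      = if b' = 0 ∧ (b = 0 ∧ a + a' + 1 = k) then F a 0 * F a' 0 else 0 := by
    intro a b a' b'
    by_cases hb : b = 0 ∧ b' = 0
    · obtain ⟨rfl, rfl⟩ := hb
      by_cases hcond : a + a' + 1 = k
      · rw [if_pos (by omega), if_pos ⟨rfl, rfl, hcond⟩]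
        norm_num
      · rw [if_neg (by omega), if_neg (by tauto)]
        ring
    · rw [zero_pow (by omega : 2*(b+b') ≠ 0),
        if_neg (show ¬(b' = 0 ∧ (b = 0 ∧ a + a' + 1 = k)) by tauto)]
      ring
  calc (∑ p ∈ (Finset.range (k+1)).sigma (fun a => Finset.range (a+1)),
          ∑ q ∈ (Finset.range (k+1)).sigma (fun a => Finset.range (a+1)),
          F p.1 p.2 * F q.1 q.2 * ((0:ℝ):ℂ) ^ (2*(p.2+q.2)) *
            (if (p.1:ℤ) + q.1 - 2*(p.2+q.2) - k = -1 then 1 else 0))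
      = ∑ a ∈ Finset.range (k+1), ∑ b ∈ Finset.range (a+1),
          ∑ a' ∈ Finset.range (k+1), ∑ b' ∈ Finset.range (a'+1),
          (if b' = 0 ∧ (b = 0 ∧ a + a' + 1 = k) then F a 0 * F a' 0 else 0) := by
        rw [Finset.sum_sigma]
        refine Finset.sum_congr rfl fun a _ => Finset.sum_congr rfl fun b _ => ?_
        rw [Finset.sum_sigma]
        refine Finset.sum_congr rfl fun a' _ => Finset.sum_congr rfl fun b' _ => ?_
        exact hterm a b a' b'
    _ = ∑ a ∈ Finset.range (k+1), ∑ b ∈ Finset.range (a+1),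
          ∑ a' ∈ Finset.range (k+1),
          (if b = 0 ∧ a + a' + 1 = k then F a 0 * F a' 0 else 0) := by
        refine Finset.sum_congr rfl fun a _ => Finset.sum_congr rfl fun b _ =>
          Finset.sum_congr rfl fun a' _ => ?_
        exact helper _ 0 (Finset.mem_range.2 (Nat.succ_pos _)) _ _
    _ = ∑ a ∈ Finset.range (k+1), ∑ b ∈ Finset.range (a+1),
          (if b = 0 ∧ a < k then F a 0 * F (k - 1 - a) 0 else 0) := by
        refine Finset.sum_congr rfl fun a _ => Finset.sum_congr rfl fun b _ => ?_
        rw [show (∑ a' ∈ Finset.range (k+1),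
            if b = 0 ∧ a + a' + 1 = k then F a 0 * F a' 0 else 0)
          = ∑ a' ∈ Finset.range (k+1),
            if a' = k - 1 - a ∧ (b = 0 ∧ a < k) then F a 0 * F a' 0 else 0 from
          Finset.sum_congr rfl fun a' _ => if_congr (by omega) rfl rfl]
        exact helper _ (k-1-a) (Finset.mem_range.2 (by omega)) _ _
    _ = ∑ a ∈ Finset.range (k+1), ∑ b ∈ Finset.range (a+1),
          (if b = 0 ∧ (a < k) then F a 0 * F (k - 1 - a) 0 else 0) := rfl
    _ = ∑ a ∈ Finset.range (k+1), (if a < k then F a 0 * F (k - 1 - a) 0 else 0) := by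
        refine Finset.sum_congr rfl fun a _ => ?_
        exact helper _ 0 (Finset.mem_range.2 (Nat.succ_pos _)) _ _
    _ = ∑ a ∈ Finset.range k, F a 0 * F (k - 1 - a) 0 := by
        rw [← Finset.sum_subset (Finset.range_subset_range.2 (Nat.le_succ k))
          (fun a _ ha => if_neg (by simpa using ha))]
        exact Finset.sum_congr rfl fun a ha =>
          if_pos (Finset.mem_range.1 ha)

/-- for a smooth, exponentially decaying `f` with Taylor expansion
`f = Σ_{a≤k} Σ_{b≤a} f_{ab} z^{a-b} z̄^b + O(|z|^{k+1})` at the origin and `k > 0`,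
`lim_{r→0⁺} (1/(2πi)) ∮_{|z|=r} f²/z^k dz = Σ_{a=0}^{k-1} f_{a0} f_{(k-1-a)0}`. -/
theorem stmt3 (f : ℂ → ℂ) (k : ℕ) (hk : 0 < k)
    (hf : ContDiff ℝ (⊤ : ℕ∞) f)
    (hdecay : ∃ C c : ℝ, 0 < C ∧ 0 < c ∧ ∀ z : ℂ, ‖f z‖ ≤ C * Real.exp (-c * ‖z‖))
    (F : ℕ → ℕ → ℂ) (C' δ : ℝ) (hδ : 0 < δ)
    (htaylor : ∀ z : ℂ, ‖z‖ ≤ δ →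
      ‖f z - ∑ a ∈ Finset.range (k + 1), ∑ b ∈ Finset.range (a + 1),
          F a b * z ^ (a - b) * (starRingEnd ℂ z) ^ b‖ ≤ C' * ‖z‖ ^ (k + 1)) :
    Filter.Tendsto
      (fun r : ℝ =>
        (1 / (2 * (π : ℂ) * Complex.I)) * ∮ z in C(0, r), f z ^ 2 / z ^ k)
      (nhdsWithin 0 (Set.Ioi 0))
      (nhds (∑ a ∈ Finset.range k, F a 0 * F (k - 1 - a) 0)) := by
  obtain ⟨C, c, hC, hc, hdec⟩ := hdecay
  set M := ∑ p ∈ Aset k, ‖F p.1 p.2‖ with hM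
  have hM0 : 0 ≤ M := Finset.sum_nonneg fun _ _ => norm_nonneg _
  have hfb : ∀ z, ‖f z‖ ≤ C := fun z => (hdec z).trans
    (mul_le_of_le_one_right hC.le (Real.exp_le_one_iff.mpr
      (by nlinarith [norm_nonneg z, hc.le])))
  have hPb : ∀ z : ℂ, ‖z‖ ≤ 1 → ‖Pfun F k z‖ ≤ M := by
    intro z hz
    refine (norm_sum_le _ _).trans (Finset.sum_le_sum fun p hp => ?_)
    rw [norm_mul, norm_mul, norm_pow, norm_pow, RCLike.norm_conj]
    have h1 : ‖z‖ ^ (p.1 - p.2) ≤ 1 := pow_le_one₀ (norm_nonneg z) hz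
    have h2 : ‖z‖ ^ p.2 ≤ 1 := pow_le_one₀ (norm_nonneg z) hz
    calc ‖F p.1 p.2‖ * ‖z‖ ^ (p.1 - p.2) * ‖z‖ ^ p.2
        ≤ ‖F p.1 p.2‖ * ‖z‖ ^ (p.1 - p.2) :=
          mul_le_of_le_one_right
            (mul_nonneg (norm_nonneg _) (pow_nonneg (norm_nonneg z) _)) h2
      _ ≤ ‖F p.1 p.2‖ := mul_le_of_le_one_right (norm_nonneg _) h1
  set K := max C' 0 * (C + M) with hK
  have hK0 : 0 ≤ K := mul_nonneg (le_max_right _ _) (by positivity)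
  have hPcont : Continuous (Pfun F k) := by
    unfold Pfun
    exact continuous_finset_sum _ fun p _ =>
      (continuous_const.mul (continuous_pow _)).mul (Complex.continuous_conj.pow _)
  have hsphere_ne : ∀ (r : ℝ), 0 < r → ∀ z ∈ Metric.sphere (0:ℂ) r, z ≠ 0 := by
    intro r hr z hz h0
    rw [Metric.mem_sphere, dist_zero_right, h0] at hz
    simp at hz; exact hr.ne' hz.symm
  have hint : ∀ (g : ℂ → ℂ), Continuous g → ∀ r : ℝ, 0 < r →
      CircleIntegrable (fun z => g z / z ^ k) 0 r := by
    intro g hg r hr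
    refine ContinuousOn.circleIntegrable hr.le fun z hz => ?_
    exact (hg.continuousAt.div ((continuous_pow k).continuousAt)
      (pow_ne_zero k (hsphere_ne r hr z hz))).continuousWithinAt
  set E : ℝ → ℂ := fun r =>
    (1 / (2*(π:ℂ)*Complex.I)) * ∮ z in C(0, r), (f z ^ 2 - Pfun F k z ^ 2) / z ^ k with hE
  have h2πi : (2*(π:ℂ)*Complex.I) ≠ 0 := by
    simp [Real.pi_ne_zero, Complex.I_ne_zero, Complex.ofReal_ne_zero]
  have heq : ∀ᶠ r in nhdsWithin (0:ℝ) (Set.Ioi 0),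
      Sfun F k r + E r
        = (1 / (2*(π:ℂ)*Complex.I)) * ∮ z in C(0, r), f z ^ 2 / z ^ k := by
    filter_upwards [self_mem_nhdsWithin] with r hr
    have hr' : 0 < r := hr
    have hint1 := hint (fun z => f z ^ 2) (hf.continuous.pow 2) r hr'
    have hint2 := hint (fun z => Pfun F k z ^ 2) (hPcont.pow 2) r hr'
    have hsub : (∮ z in C(0, r), (f z ^ 2 - Pfun F k z ^ 2) / z ^ k)
        = (∮ z in C(0, r), f z ^ 2 / z ^ k) - ∮ z in C(0, r), Pfun F k z ^ 2 / z ^ k := by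
      rw [show (fun z : ℂ => (f z ^ 2 - Pfun F k z ^ 2) / z ^ k)
          = fun z : ℂ => f z ^ 2 / z ^ k - Pfun F k z ^ 2 / z ^ k from
        funext fun z => sub_div _ _ _]
      exact circleIntegral.integral_sub hint1 hint2
    have hcancel : (1 / (2*(π:ℂ)*Complex.I)) * ((2*(π:ℂ)*Complex.I) * Sfun F k r)
        = Sfun F k r := by
      field_simp
    rw [hE]
    simp only
    rw [hsub, L1 F k r hr', mul_sub, hcancel]
    ring
  have hS : Filter.Tendsto (Sfun F k) (nhdsWithin 0 (Set.Ioi 0))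
      (nhds (∑ a ∈ Finset.range k, F a 0 * F (k - 1 - a) 0)) := by
    have hcont : Continuous (Sfun F k) := by
      unfold Sfun
      exact continuous_finset_sum _ fun pq _ =>
        (continuous_const.mul (Complex.continuous_ofReal.pow _)).mul continuous_const
    have h0 := hcont.tendsto 0
    rw [L3 F k hk] at h0
    exact h0.mono_left nhdsWithin_le_nhds
  have hErr : Filter.Tendsto E (nhdsWithin 0 (Set.Ioi 0)) (nhds 0) := by
    refine squeeze_zero_norm' (a := fun r : ℝ => K * r ^ 2) ?_ ?_
    · filter_upwards [Ioo_mem_nhdsGT_of_mem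
        (⟨le_refl (0:ℝ), lt_min hδ one_pos⟩ : (0:ℝ) ∈ Set.Ico 0 (min δ 1))] with r hr
      obtain ⟨hr0, hrlt⟩ := hr
      have hrδ : r ≤ δ := le_trans hrlt.le (min_le_left _ _)
      have hr1 : r ≤ 1 := le_trans hrlt.le (min_le_right _ _)
      have hb : ∀ z ∈ Metric.sphere (0:ℂ) r,
          ‖(f z ^ 2 - Pfun F k z ^ 2) / z ^ k‖ ≤ K * r := by
        intro z hz
        have hzr : ‖z‖ = r := by simpa using hz
        have h1 : ‖f z - Pfun F k z‖ ≤ max C' 0 * r ^ (k+1) := by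
          have ht := htaylor z (by rw [hzr]; exact hrδ)
          rw [← Pfun_eq, hzr] at ht
          exact ht.trans (mul_le_mul_of_nonneg_right (le_max_left _ _) (by positivity))
        have h2 : ‖f z + Pfun F k z‖ ≤ C + M :=
          (norm_add_le _ _).trans (add_le_add (hfb z) (hPb z (by rw [hzr]; exact hr1)))
        have h3 : f z ^ 2 - Pfun F k z ^ 2 = (f z - Pfun F k z) * (f z + Pfun F k z) := by
          ring
        rw [norm_div, h3, norm_mul, norm_pow, hzr]
        have h4 : ‖f z - Pfun F k z‖ * ‖f z + Pfun F k z‖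
            ≤ (max C' 0 * r ^ (k+1)) * (C + M) :=
          mul_le_mul h1 h2 (norm_nonneg _) (by positivity)
        have h5 : (max C' 0 * r ^ (k+1)) * (C + M) / r ^ k = K * r := by
          rw [hK, pow_succ]
          field_simp
        rw [← h5]
        exact div_le_div_of_nonneg_right h4 (pow_pos hr0 k).le
      have hbig := circleIntegral.norm_integral_le_of_norm_le_const hr0.le hb
      have hnorm1 : ‖(1 : ℂ) / (2*(π:ℂ)*Complex.I)‖ = (2*π)⁻¹ := by
        simp [Real.pi_pos.le]
      calc ‖E r‖ = (2*π)⁻¹ * ‖∮ z in C(0, r), (f z ^ 2 - Pfun F k z ^ 2) / z ^ k‖ := by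
            rw [hE]; simp only; rw [norm_mul, hnorm1]
        _ ≤ (2*π)⁻¹ * (2*π*r*(K*r)) := by
            gcongr
        _ = K * r ^ 2 := by
            field_simp
    · have : Continuous fun r : ℝ => K * r ^ 2 := by continuity
      simpa using (this.tendsto 0).mono_left nhdsWithin_le_nhds
  have hfinal := hS.add hErr
  rw [add_zero] at hfinal
  exact hfinal.congr' heq
end

section
/- With Φ as in the model case with index k ≤ 0 (i.e., leading term T z^p z̄^q with p ≤ q), the only smooth, exponentially decaying solution f of ∂f/∂z̄ + Φ f̄ = 0 on ℂ is f ≡ 0. -/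
/-- Wirtinger derivative `∂/∂z̄`. -/
noncomputable def dzbar (f : ℂ → ℂ) (z : ℂ) : ℂ :=
  (1 / 2) * (fderiv ℝ f z 1 + Complex.I * fderiv ℝ f z Complex.I)

open Complex

lemma dzbar_of_holo {h : ℂ → ℂ} {d z : ℂ} (hd : HasDerivAt h d z) : dzbar h z = 0 := by
  have H : HasFDerivAt h ((ContinuousLinearMap.smulRight (1 : ℂ →L[ℂ] ℂ) d).restrictScalars ℝ) z :=
    (hd.hasFDerivAt).restrictScalars ℝ
  rw [dzbar, H.fderiv]
  simp
  rw [← mul_assoc, Complex.I_mul_I]; ring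

lemma dzbar_mul {u v : ℂ → ℂ} {z : ℂ} (hu : DifferentiableAt ℝ u z)
    (hv : DifferentiableAt ℝ v z) :
    dzbar (fun w => u w * v w) z = dzbar u z * v z + u z * dzbar v z := by
  rw [dzbar, fderiv_fun_mul hu hv]
  simp [dzbar]
  ring

/-- with `Φ` as in the model case with index `k = p - q ≤ 0`
(i.e. `p ≤ q`), the only smooth, exponentially decaying solution of
`∂f/∂z̄ + Φ f̄ = 0` on `ℂ` is `f ≡ 0`. -/
theorem stmt5 (T : ℂ) (p q m : ℕ) (ε : ℝ) (Φ φ : ℂ → ℂ)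
    (hm : m = p + q) (hT : T ≠ 0) (hε : ε ∈ Set.Ioo (0 : ℝ) 1)
    (hpq : p ≤ q)
    (hΦ : ∀ z : ℂ, Φ z = T * z ^ p * (starRingEnd ℂ z) ^ q + φ z)
    (hφ : ∀ z : ℂ, ‖φ z‖ ≤ ‖T‖ * (1 - ε) * ‖z‖ ^ m)
    (hΦsm : ContDiff ℝ (⊤ : ℕ∞) Φ)
    (f : ℂ → ℂ) (hf : ContDiff ℝ (⊤ : ℕ∞) f)
    (hdecay : ∃ C c : ℝ, 0 < C ∧ 0 < c ∧ ∀ z : ℂ, ‖f z‖ ≤ C * Real.exp (-c * ‖z‖))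
    (heq : ∀ z : ℂ, dzbar f z + Φ z * starRingEnd ℂ (f z) = 0) :
    ∀ z : ℂ, f z = 0 := by
  obtain ⟨C, c, hC, hc, hdec⟩ := hdecay
  obtain ⟨hε0, hε1⟩ := hε
  set n := q - p with hn
  have hnp : n + p = q := Nat.sub_add_cancel hpq
  have hnm : n + m = 2 * q := by omega
  have hfd : Differentiable ℝ f := hf.differentiable (by simp)
  have hdzf : ∀ z, dzbar f z = -(Φ z * starRingEnd ℂ (f z)) := fun z =>
    eq_neg_of_add_eq_zero_left (heq z)
  set A : ℂ → ℂ := fun z => (starRingEnd ℂ T) * z ^ n with hA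
  have hAder : ∀ z : ℂ, HasDerivAt A ((starRingEnd ℂ T) * (n * z ^ (n - 1))) z := by
    intro z
    exact (hasDerivAt_pow n z).const_mul _
  have hAd : Differentiable ℝ A := fun z =>
    ((hAder z).differentiableAt).restrictScalars ℝ
  set G : ℂ → ℂ := fun z => A z * (f z * f z) with hG
  have hGdiff : Differentiable ℝ G := hAd.mul (hfd.mul hfd)
  have hGdzbar : ∀ z, dzbar G z = (-2) * (A z * Φ z * (f z * starRingEnd ℂ (f z))) := by
    intro z
    rw [hG]
    rw [dzbar_mul (hAd z) (show DifferentiableAt ℝ (fun w => f w * f w) z from (hfd z).mul (hfd z)), dzbar_mul (hfd z) (hfd z),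
      dzbar_of_holo (hAder z), hdzf z]
    ring
  -- pointwise lower bound on the real part
  have hRe : ∀ z : ℂ, ε * ‖T‖ ^ 2 * ‖z‖ ^ (2 * q) ≤ (A z * Φ z).re := by
    intro z
    have h1 : A z * Φ z = ((normSq T * normSq z ^ q : ℝ) : ℂ)
        + (starRingEnd ℂ T) * z ^ n * φ z := by
      rw [hΦ z, hA]
      have h2 : starRingEnd ℂ T * z ^ n * (T * z ^ p * starRingEnd ℂ z ^ q + φ z)
          = (T * starRingEnd ℂ T) * ((z ^ n * z ^ p) * (starRingEnd ℂ z) ^ q)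
            + starRingEnd ℂ T * z ^ n * φ z := by ring
      rw [h2, ← pow_add, hnp, ← mul_pow, Complex.mul_conj, Complex.mul_conj]
      push_cast
      ring
    rw [h1]
    have h3 : (((normSq T * normSq z ^ q : ℝ) : ℂ) + starRingEnd ℂ T * z ^ n * φ z).re
        = normSq T * normSq z ^ q + (starRingEnd ℂ T * z ^ n * φ z).re := by
      rw [Complex.add_re, Complex.ofReal_re]
    rw [h3]
    have habs : ‖starRingEnd ℂ T * z ^ n * φ z‖ ≤ ‖T‖ * ‖z‖ ^ n * (‖T‖ * (1 - ε) * ‖z‖ ^ m) := by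
      rw [norm_mul, norm_mul, norm_pow, RCLike.norm_conj]
      exact mul_le_mul_of_nonneg_left (hφ z) (by positivity)
    have h4 : -(‖T‖ * ‖z‖ ^ n * (‖T‖ * (1 - ε) * ‖z‖ ^ m))
        ≤ (starRingEnd ℂ T * z ^ n * φ z).re := by
      have := (abs_le.1 (Complex.abs_re_le_norm (starRingEnd ℂ T * z ^ n * φ z))).1
      linarith
    have h5 : normSq T = ‖T‖ ^ 2 := by
      rw [Complex.normSq_eq_norm_sq]
    have h6 : normSq z ^ q = ‖z‖ ^ (2 * q) := by
      rw [Complex.normSq_eq_norm_sq, ← pow_mul]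
    have h7 : ‖z‖ ^ n * ‖z‖ ^ m = ‖z‖ ^ (2 * q) := by
      rw [← pow_add, hnm]
    have h8 : ‖T‖ * ‖z‖ ^ n * (‖T‖ * (1 - ε) * ‖z‖ ^ m) = ‖T‖ ^ 2 * (1 - ε) * ‖z‖ ^ (2 * q) := by
      rw [← h7]; ring
    rw [h5, h6]
    linarith [h4, h8]
  -- the nonnegative density
  set Hfun : ℂ → ℝ := fun z => 4 * normSq (f z) * (A z * Φ z).re with hHfun
  have hHpos : ∀ z, 0 ≤ Hfun z := by
    intro z
    have h1 := hRe z
    have h2 : (0:ℝ) ≤ ε * ‖T‖ ^ 2 * ‖z‖ ^ (2*q) := by positivity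
    have h3 := Complex.normSq_nonneg (f z)
    exact mul_nonneg (by positivity) (h2.trans h1)
  -- coordinates
  set LC : (ℝ × ℝ) →L[ℝ] ℂ := Complex.equivRealProdCLM.symm.toContinuousLinearMap with hLCdef
  have hLCapp : ∀ w : ℝ × ℝ, LC w = w.1 + w.2 * Complex.I := fun w =>
    Complex.equivRealProdCLM_symm_apply w
  have hLC1 : LC (1, 0) = 1 := by rw [hLCapp]; simp
  have hLCI : LC (0, 1) = Complex.I := by rw [hLCapp]; simp
  -- the key pointwise identity for the divergence integrand
  have hHkey : ∀ z : ℂ, (fderiv ℝ G z 1).re - (fderiv ℝ G z Complex.I).im = -(Hfun z) := by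
    intro z
    have h1 := hGdzbar z
    rw [Complex.mul_conj] at h1
    have h2 : fderiv ℝ G z 1 + Complex.I * fderiv ℝ G z Complex.I
        = (((-4 : ℝ) * normSq (f z) : ℝ) : ℂ) * (A z * Φ z) := by
      have h0 : (2:ℂ) * dzbar G z = fderiv ℝ G z 1 + Complex.I * fderiv ℝ G z Complex.I := by
        rw [dzbar]; ring
      rw [← h0, h1]
      push_cast
      ring
    have h3 := congrArg Complex.re h2
    rw [Complex.add_re, Complex.re_ofReal_mul] at h3
    have h4 : (Complex.I * fderiv ℝ G z Complex.I).re = -(fderiv ℝ G z Complex.I).im := by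
      simp [Complex.mul_re]
    rw [h4] at h3
    rw [hHfun]
    simp only
    linarith [h3]
  -- vector field components
  set U : ℝ × ℝ → ℝ := fun w => (G (LC w)).re with hUdef
  set V : ℝ × ℝ → ℝ := fun w => -((G (LC w)).im) with hVdef
  set U' : (ℝ × ℝ) → ((ℝ × ℝ) →L[ℝ] ℝ) :=
    fun w => Complex.reCLM.comp ((fderiv ℝ G (LC w)).comp LC) with hU'def
  set V' : (ℝ × ℝ) → ((ℝ × ℝ) →L[ℝ] ℝ) :=
    fun w => -(Complex.imCLM.comp ((fderiv ℝ G (LC w)).comp LC)) with hV'def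
  have hUd : ∀ w : ℝ × ℝ, HasFDerivAt U (U' w) w := by
    intro w
    exact Complex.reCLM.hasFDerivAt.comp w
      (((hGdiff (LC w)).hasFDerivAt).comp w LC.hasFDerivAt)
  have hVd : ∀ w : ℝ × ℝ, HasFDerivAt V (V' w) w := by
    intro w
    exact (Complex.imCLM.hasFDerivAt.comp w
      (((hGdiff (LC w)).hasFDerivAt).comp w LC.hasFDerivAt)).neg
  have hkey : ∀ w : ℝ × ℝ, U' w (1, 0) + V' w (0, 1) = -(Hfun (LC w)) := by
    intro w
    have h1 : U' w (1, 0) = (fderiv ℝ G (LC w) 1).re := by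
      rw [hU'def]; simp only [ContinuousLinearMap.comp_apply, hLC1]; rfl
    have h2 : V' w (0, 1) = -((fderiv ℝ G (LC w) Complex.I).im) := by
      rw [hV'def]
      simp only [ContinuousLinearMap.neg_apply, ContinuousLinearMap.comp_apply, hLCI]
      rfl
    rw [h1, h2, ← hHkey (LC w)]
    ring
  -- continuity facts
  have hLCc : Continuous LC := LC.continuous
  have hHcont : Continuous Hfun := by
    rw [hHfun]
    exact (continuous_const.mul (Complex.continuous_normSq.comp hf.continuous)).mul
      (Complex.continuous_re.comp ((continuous_const.mul (continuous_pow n)).mul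
        hΦsm.continuous))
  have hUc : Continuous U := Complex.continuous_re.comp (hGdiff.continuous.comp hLCc)
  have hVc : Continuous V := (Complex.continuous_im.comp (hGdiff.continuous.comp hLCc)).neg
  -- divergence theorem on squares
  have hdiv : ∀ S : ℝ, 0 ≤ S →
      (∫ w in Set.Icc ((-S, -S) : ℝ × ℝ) ((S, S) : ℝ × ℝ), -(Hfun (LC w)))
        = (((∫ x in (-S)..S, V (x, S)) - ∫ x in (-S)..S, V (x, -S))
            + ∫ y in (-S)..S, U (S, y)) - ∫ y in (-S)..S, U (-S, y) := by
    intro S hS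
    have hle : ((-S, -S) : ℝ × ℝ) ≤ (S, S) := ⟨by dsimp; linarith, by dsimp; linarith⟩
    have hInt : MeasureTheory.IntegrableOn (fun w => U' w (1, 0) + V' w (0, 1))
        (Set.Icc ((-S, -S) : ℝ × ℝ) ((S, S) : ℝ × ℝ)) := by
      have : (fun w : ℝ × ℝ => U' w (1, 0) + V' w (0, 1)) = fun w => -(Hfun (LC w)) :=
        funext hkey
      rw [this]
      exact ((hHcont.comp hLCc).neg).continuousOn.integrableOn_compact isCompact_Icc
    have hmain :=
      MeasureTheory.integral_divergence_prod_Icc_of_hasFDerivAt_off_countable_of_le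
        U V U' V' ((-S, -S) : ℝ × ℝ) ((S, S) : ℝ × ℝ) hle ∅ Set.countable_empty
        hUc.continuousOn hVc.continuousOn (fun x _ => hUd x) (fun x _ => hVd x) hInt
    have hcongr : (∫ w in Set.Icc ((-S, -S) : ℝ × ℝ) ((S, S) : ℝ × ℝ),
        (U' w (1, 0) + V' w (0, 1)))
        = ∫ w in Set.Icc ((-S, -S) : ℝ × ℝ) ((S, S) : ℝ × ℝ), -(Hfun (LC w)) := by
      congr 1
      exact funext hkey
    rw [hcongr] at hmain
    exact hmain
  -- bound on G on the boundary of the square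
  set MS : ℝ → ℝ := fun S => ‖T‖ * (2*S) ^ n * (C * Real.exp (-(c*S))) ^ 2 with hMSdef
  have hGb : ∀ S : ℝ, 0 ≤ S → ∀ w : ℝ × ℝ, |w.1| ≤ S → |w.2| ≤ S →
      (S ≤ |w.1| ∨ S ≤ |w.2|) → ‖G (LC w)‖ ≤ MS S := by
    intro S hS w hw1 hw2 hw3
    set z := LC w with hz
    have hre : z.re = w.1 := by rw [hz, hLCapp]; simp
    have him : z.im = w.2 := by rw [hz, hLCapp]; simp
    have hzup : ‖z‖ ≤ 2 * S := by
      calc ‖z‖ = ‖z‖ := rfl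
        _ ≤ |z.re| + |z.im| := Complex.norm_le_abs_re_add_abs_im z
        _ ≤ S + S := by rw [hre, him]; exact add_le_add hw1 hw2
        _ = 2 * S := by ring
    have hzlo : S ≤ ‖z‖ := by
      rcases hw3 with h | h
      · exact h.trans (hre ▸ Complex.abs_re_le_norm z)
      · exact h.trans (him ▸ Complex.abs_im_le_norm z)
    have hnorm : ‖G z‖ = ‖T‖ * ‖z‖ ^ n * (‖f z‖ * ‖f z‖) := by
      simp only [hG, hA, norm_mul, norm_pow, RCLike.norm_conj]
    rw [hnorm, hMSdef]
    have hfz : ‖f z‖ ≤ C * Real.exp (-(c*S)) := by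
      refine (hdec z).trans ?_
      have h9 := mul_le_mul_of_nonneg_left hzlo hc.le
      have : -c * ‖z‖ ≤ -(c*S) := by linarith
      exact mul_le_mul_of_nonneg_left (Real.exp_le_exp.2 this) hC.le
    have h1 : ‖z‖ ^ n ≤ (2*S) ^ n := pow_le_pow_left₀ (norm_nonneg z) hzup n
    have h2 : ‖f z‖ * ‖f z‖ ≤ (C * Real.exp (-(c*S))) ^ 2 := by
      rw [sq]
      exact mul_le_mul hfz hfz (norm_nonneg _) (by positivity)
    have h3 : (0:ℝ) ≤ ‖T‖ := norm_nonneg T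
    have h4 : (0:ℝ) ≤ ‖z‖ ^ n := by positivity
    have h5 : (0:ℝ) ≤ ‖f z‖ * ‖f z‖ := by positivity
    exact mul_le_mul (mul_le_mul_of_nonneg_left h1 h3) h2 h5 (by positivity)
  -- bound the four boundary integrals
  have hbd : ∀ S : ℝ, 0 ≤ S →
      (∫ w in Set.Icc ((-S, -S) : ℝ × ℝ) ((S, S) : ℝ × ℝ), Hfun (LC w))
        ≤ 4 * (MS S * (2*S)) := by
    intro S hS
    have habs : ∀ w : ℝ × ℝ, |U w| ≤ ‖G (LC w)‖ := by
      intro w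
      rw [hUdef]
      exact Complex.abs_re_le_norm (G (LC w))
    have habsV : ∀ w : ℝ × ℝ, |V w| ≤ ‖G (LC w)‖ := by
      intro w
      rw [hVdef]
      simp only [abs_neg]
      exact Complex.abs_im_le_norm (G (LC w))
    have hmem : ∀ x ∈ Set.uIoc (-S) S, |x| ≤ S := by
      intro x hx
      rw [Set.uIoc_of_le (by linarith : -S ≤ S)] at hx
      exact abs_le.2 ⟨hx.1.le, hx.2⟩
    have hSS : |S - (-S)| = 2 * S := by rw [_root_.abs_of_nonneg (by linarith : (0:ℝ) ≤ S - -S)]; ring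
    have hb1 : |∫ x in (-S)..S, V (x, S)| ≤ MS S * (2*S) := by
      have := intervalIntegral.norm_integral_le_of_norm_le_const
        (a := -S) (b := S) (C := MS S) (f := fun x => V (x, S)) ?_
      · rwa [hSS] at this
      · intro x hx
        refine (habsV (x, S)).trans (hGb S hS (x, S) (hmem x hx) ?_ (Or.inr ?_)) <;>
          rw [_root_.abs_of_nonneg hS]
    have hb2 : |∫ x in (-S)..S, V (x, -S)| ≤ MS S * (2*S) := by
      have := intervalIntegral.norm_integral_le_of_norm_le_const
        (a := -S) (b := S) (C := MS S) (f := fun x => V (x, -S)) ?_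
      · rwa [hSS] at this
      · intro x hx
        refine (habsV (x, -S)).trans (hGb S hS (x, -S) (hmem x hx) ?_ (Or.inr ?_)) <;>
          rw [abs_neg, _root_.abs_of_nonneg hS]
    have hb3 : |∫ y in (-S)..S, U (S, y)| ≤ MS S * (2*S) := by
      have := intervalIntegral.norm_integral_le_of_norm_le_const
        (a := -S) (b := S) (C := MS S) (f := fun y => U (S, y)) ?_
      · rwa [hSS] at this
      · intro y hy
        refine (habs (S, y)).trans (hGb S hS (S, y) ?_ (hmem y hy) (Or.inl ?_)) <;>
          rw [_root_.abs_of_nonneg hS]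
    have hb4 : |∫ y in (-S)..S, U (-S, y)| ≤ MS S * (2*S) := by
      have := intervalIntegral.norm_integral_le_of_norm_le_const
        (a := -S) (b := S) (C := MS S) (f := fun y => U (-S, y)) ?_
      · rwa [hSS] at this
      · intro y hy
        refine (habs (-S, y)).trans (hGb S hS (-S, y) ?_ (hmem y hy) (Or.inl ?_)) <;>
          rw [abs_neg, _root_.abs_of_nonneg hS]
    have hJneg : (∫ w in Set.Icc ((-S, -S) : ℝ × ℝ) ((S, S) : ℝ × ℝ), Hfun (LC w))
        = -((((∫ x in (-S)..S, V (x, S)) - ∫ x in (-S)..S, V (x, -S))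
            + ∫ y in (-S)..S, U (S, y)) - ∫ y in (-S)..S, U (-S, y)) := by
      rw [← hdiv S hS, MeasureTheory.integral_neg]
      ring
    rw [hJneg]
    have := abs_le.1 hb1
    have := abs_le.1 hb2
    have := abs_le.1 hb3
    have := abs_le.1 hb4
    linarith [this]
  -- the bound tends to zero
  have hβ : Filter.Tendsto (fun S : ℝ => 4 * (MS S * (2*S))) Filter.atTop (nhds 0) := by
    have h2c : (0:ℝ) < 2 * c := by linarith
    have h1 : Filter.Tendsto (fun S : ℝ => (2*c*S) ^ (n+1) * Real.exp (-(2*c*S)))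
        Filter.atTop (nhds 0) := by
      have hcomp := (Real.tendsto_pow_mul_exp_neg_atTop_nhds_zero (n+1)).comp
        (Filter.Tendsto.const_mul_atTop h2c Filter.tendsto_id)
      exact hcomp
    set K : ℝ := 8 * ‖T‖ * 2 ^ n * C ^ 2 / (2*c) ^ (n+1) with hK
    have h2 := h1.const_mul K
    rw [mul_zero] at h2
    refine h2.congr ?_
    intro S
    have hexp : Real.exp (-(2*c*S)) = Real.exp (-(c*S)) * Real.exp (-(c*S)) := by
      rw [← Real.exp_add]; ring_nf
    rw [hK, hMSdef]
    have hne : ((2*c) ^ (n+1) : ℝ) ≠ 0 := by positivity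
    field_simp
    rw [hexp, mul_pow, mul_pow]
    ring
  -- the integral of Hfun over every square vanishes
  have hJ0 : ∀ R : ℝ, 0 ≤ R →
      (∫ w in Set.Icc ((-R, -R) : ℝ × ℝ) ((R, R) : ℝ × ℝ), Hfun (LC w)) = 0 := by
    intro R hR
    have hint : ∀ S : ℝ, MeasureTheory.IntegrableOn (fun w => Hfun (LC w))
        (Set.Icc ((-S, -S) : ℝ × ℝ) ((S, S) : ℝ × ℝ)) :=
      fun S => (hHcont.comp hLCc).continuousOn.integrableOn_compact isCompact_Icc
    have hnn : (0:ℝ) ≤ ∫ w in Set.Icc ((-R, -R) : ℝ × ℝ) ((R, R) : ℝ × ℝ), Hfun (LC w) :=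
      MeasureTheory.setIntegral_nonneg measurableSet_Icc (fun w _ => hHpos (LC w))
    refine le_antisymm ?_ hnn
    refine ge_of_tendsto hβ ?_
    filter_upwards [Filter.eventually_ge_atTop R, Filter.eventually_ge_atTop (0:ℝ)] with S hSR hS0
    have hsub : Set.Icc ((-R, -R) : ℝ × ℝ) ((R, R) : ℝ × ℝ)
        ⊆ Set.Icc ((-S, -S) : ℝ × ℝ) ((S, S) : ℝ × ℝ) := by
      apply Set.Icc_subset_Icc
      · exact ⟨by dsimp; linarith, by dsimp; linarith⟩
      · exact ⟨by dsimp; linarith, by dsimp; linarith⟩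
    have hmono : (∫ w in Set.Icc ((-R, -R) : ℝ × ℝ) ((R, R) : ℝ × ℝ), Hfun (LC w))
        ≤ ∫ w in Set.Icc ((-S, -S) : ℝ × ℝ) ((S, S) : ℝ × ℝ), Hfun (LC w) :=
      MeasureTheory.setIntegral_mono_set (hint S)
        (Filter.Eventually.of_forall (fun w => hHpos (LC w))) (hsub.eventuallyLE)
    exact hmono.trans (hbd S hS0)
  -- Hfun vanishes identically
  have hH0 : ∀ z : ℂ, Hfun z = 0 := by
    intro z₀
    by_contra hne
    have hpos : 0 < Hfun z₀ := lt_of_le_of_ne (hHpos z₀) (Ne.symm hne)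
    set w₀ : ℝ × ℝ := Complex.equivRealProdCLM z₀ with hw₀
    have hLCw₀ : LC w₀ = z₀ := Complex.equivRealProdCLM.symm_apply_apply z₀
    have hopen : IsOpen {w : ℝ × ℝ | Hfun z₀ / 2 < Hfun (LC w)} :=
      isOpen_lt continuous_const (hHcont.comp hLCc)
    have hw₀mem : w₀ ∈ {w : ℝ × ℝ | Hfun z₀ / 2 < Hfun (LC w)} := by
      simp only [Set.mem_setOf_eq, hLCw₀]
      linarith
    obtain ⟨δ, hδ, hball⟩ := Metric.isOpen_iff.1 hopen w₀ hw₀mem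
    set δ' : ℝ := min δ 1 with hδ'
    have hδ'0 : 0 < δ' := lt_min hδ one_pos
    have hball' : Metric.ball w₀ δ' ⊆ {w : ℝ × ℝ | Hfun z₀ / 2 < Hfun (LC w)} :=
      (Metric.ball_subset_ball (min_le_left δ 1)).trans hball
    set R : ℝ := ‖w₀‖ + 1 with hR
    have hR0 : (0:ℝ) ≤ R := by positivity
    have hsub : Metric.ball w₀ δ' ⊆ Set.Icc ((-R, -R) : ℝ × ℝ) ((R, R) : ℝ × ℝ) := by
      intro w hw
      have hwnorm : ‖w‖ ≤ ‖w₀‖ + 1 := by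
        have h1 : dist w w₀ < δ' := Metric.mem_ball.1 hw
        have h2 : δ' ≤ 1 := min_le_right δ 1
        calc ‖w‖ = ‖w₀ + (w - w₀)‖ := by ring_nf
          _ ≤ ‖w₀‖ + ‖w - w₀‖ := norm_add_le _ _
          _ ≤ ‖w₀‖ + 1 := by
              have : ‖w - w₀‖ = dist w w₀ := (dist_eq_norm w w₀).symm
              linarith
      have h1 : |w.1| ≤ R := by
        rw [hR]
        calc |w.1| = ‖w.1‖ := rfl
          _ ≤ ‖w‖ := norm_fst_le w
          _ ≤ ‖w₀‖ + 1 := hwnorm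
      have h2 : |w.2| ≤ R := by
        rw [hR]
        calc |w.2| = ‖w.2‖ := rfl
          _ ≤ ‖w‖ := norm_snd_le w
          _ ≤ ‖w₀‖ + 1 := hwnorm
      constructor
      · exact ⟨by dsimp; linarith [abs_le.1 h1]; , by dsimp; linarith [abs_le.1 h2]⟩
      · exact ⟨by dsimp; linarith [abs_le.1 h1], by dsimp; linarith [abs_le.1 h2]⟩
    have hint : MeasureTheory.IntegrableOn (fun w => Hfun (LC w))
        (Set.Icc ((-R, -R) : ℝ × ℝ) ((R, R) : ℝ × ℝ)) :=
      (hHcont.comp hLCc).continuousOn.integrableOn_compact isCompact_Icc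
    have hintball : MeasureTheory.IntegrableOn (fun w => Hfun (LC w)) (Metric.ball w₀ δ') :=
      hint.mono_set hsub
    have hlow : Hfun z₀ / 2 * (MeasureTheory.volume (Metric.ball w₀ δ')).toReal
        ≤ ∫ w in Metric.ball w₀ δ', Hfun (LC w) := by
      apply MeasureTheory.setIntegral_ge_of_const_le_real measurableSet_ball
        (MeasureTheory.measure_ball_lt_top.ne)
        (fun w hw => (hball' hw).le) hintball
    have hmono : (∫ w in Metric.ball w₀ δ', Hfun (LC w))
        ≤ ∫ w in Set.Icc ((-R, -R) : ℝ × ℝ) ((R, R) : ℝ × ℝ), Hfun (LC w) :=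
      MeasureTheory.setIntegral_mono_set hint
        (Filter.Eventually.of_forall (fun w => hHpos (LC w))) (hsub.eventuallyLE)
    have hvol : 0 < (MeasureTheory.volume (Metric.ball w₀ δ')).toReal := by
      refine ENNReal.toReal_pos ?_ (MeasureTheory.measure_ball_lt_top.ne)
      exact (Metric.measure_ball_pos _ w₀ hδ'0).ne'
    have hJR := hJ0 R hR0
    have hprod : 0 < Hfun z₀ / 2 * (MeasureTheory.volume (Metric.ball w₀ δ')).toReal :=
      mul_pos (half_pos hpos) hvol
    linarith [hlow, hmono, hprod]
  -- conclude f = 0 away from the origin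
  have hf0 : ∀ z : ℂ, z ≠ 0 → f z = 0 := by
    intro z hz
    have h1 := hH0 z
    have h2 := hRe z
    have hTn : (0:ℝ) < ‖T‖ := norm_pos_iff.2 hT
    have hzn : (0:ℝ) < ‖z‖ := norm_pos_iff.2 hz
    have h3 : (0:ℝ) < ε * ‖T‖ ^ 2 * ‖z‖ ^ (2*q) := by positivity
    have hre' : 0 < (A z * Φ z).re := lt_of_lt_of_le h3 h2
    have h4 : normSq (f z) = 0 := by
      simp only [hHfun] at h1
      rcases mul_eq_zero.mp h1 with h | h
      · rcases mul_eq_zero.mp h with h' | h'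
        · norm_num at h'
        · exact h'
      · exact absurd h (ne_of_gt hre')
    exact Complex.normSq_eq_zero.mp h4
  -- conclude at the origin by continuity
  have hfeq : f = fun _ => (0:ℂ) := by
    apply Continuous.ext_on (dense_compl_singleton (0:ℂ)) hf.continuous continuous_const
    intro z hz
    exact hf0 z hz
  intro z
  rw [hfeq]
end

section
/- Let Ψ ∈ C¹ with ∇Ψ denoting a covariant derivative, and let H = 𝒟 + 𝒜 where 𝒟 is a Dirac-type operator with symbol 𝔠𝔩 and 𝒜 = 𝒜_Φ is a conjugate-linear bundle map as in the generalized Jackiw–Rossi setup with sign conventions 𝒜∘𝔠𝔩(v) = σ 𝔠𝔩(v)∘𝒜 and 𝒜* = 𝔰' 𝒜 with σ + 𝔰' ·(±1) = 0 (concentrating-pair condition). Then 𝒟* ∘ 𝒜 + 𝒜* ∘ 𝒟 = 𝔠𝔩(𝒜_{∇Φ}), a zeroth-order (bundle map) operator. -/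
open Module

/-- concentrating-pair identity (toy flat model). If `D = Σᵢ cᵢ ∂ᵢ`
is a Dirac-type operator (`cᵢ` skew-adjoint, so `D* = D` formally) and `A(x)` is a
(real-linear, e.g. conjugate-linear) bundle map family with `A(x) cᵢ = σ cᵢ A(x)`,
`A(x)* = s A(x)` and the concentrating-pair condition `σ + s = 0`, then
`D* ∘ A + A* ∘ D = Σᵢ cᵢ (∂ᵢ A)` is a zeroth-order (bundle map) operator. -/
theorem stmt10 {n d : ℕ}
    (c : Fin d → (EuclideanSpace ℝ (Fin n) →L[ℝ] EuclideanSpace ℝ (Fin n)))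
    (A : EuclideanSpace ℝ (Fin d) →
      (EuclideanSpace ℝ (Fin n) →L[ℝ] EuclideanSpace ℝ (Fin n)))
    (hA : ContDiff ℝ (⊤ : ℕ∞) A) (σ s : ℝ) (hσ : σ = 1 ∨ σ = -1)
    (hcomm : ∀ (x : EuclideanSpace ℝ (Fin d)) (i : Fin d),
      (A x).comp (c i) = σ • (c i).comp (A x))
    (hskew : ∀ i : Fin d, ContinuousLinearMap.adjoint (c i) = -(c i))
    (hadj : ∀ x : EuclideanSpace ℝ (Fin d),
      ContinuousLinearMap.adjoint (A x) = s • A x)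
    (hsign : σ + s = 0)
    (Ψ : EuclideanSpace ℝ (Fin d) → EuclideanSpace ℝ (Fin n))
    (hΨ : ContDiff ℝ (⊤ : ℕ∞) Ψ) :
    ∀ x : EuclideanSpace ℝ (Fin d),
      (∑ i, c i (fderiv ℝ (fun y => A y (Ψ y)) x (EuclideanSpace.single i 1)))
        + s • A x (∑ i, c i (fderiv ℝ Ψ x (EuclideanSpace.single i 1)))
      = ∑ i, c i ((fderiv ℝ A x (EuclideanSpace.single i 1)) (Ψ x)) := by
  intro x
  have hAd : DifferentiableAt ℝ A x := hA.differentiable (by simp) x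
  have hΨd : DifferentiableAt ℝ Ψ x := hΨ.differentiable (by simp) x
  have hσ2 : σ * σ = 1 := by rcases hσ with h | h <;> simp [h]
  have key : ∀ (i : Fin d) (v : EuclideanSpace ℝ (Fin n)),
      c i (A x v) = σ • A x (c i v) := by
    intro i v
    have h1 : A x (c i v) = σ • c i (A x v) := by
      have := congrArg (fun T => T v) (hcomm x i)
      simpa using this
    rw [h1, smul_smul, hσ2, one_smul]
  have hder : ∀ v, fderiv ℝ (fun y => A y (Ψ y)) x v
      = (fderiv ℝ A x v) (Ψ x) + A x (fderiv ℝ Ψ x v) := by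
    intro v
    rw [fderiv_clm_apply hAd hΨd]
    simp [add_comm]
  calc (∑ i, c i (fderiv ℝ (fun y => A y (Ψ y)) x (EuclideanSpace.single i 1)))
        + s • A x (∑ i, c i (fderiv ℝ Ψ x (EuclideanSpace.single i 1)))
      = (∑ i, (c i ((fderiv ℝ A x (EuclideanSpace.single i 1)) (Ψ x))
            + σ • A x (c i (fderiv ℝ Ψ x (EuclideanSpace.single i 1)))))
        + s • A x (∑ i, c i (fderiv ℝ Ψ x (EuclideanSpace.single i 1))) := by
        congr 1
        refine Finset.sum_congr rfl fun i _ => ?_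
        rw [hder, map_add, key]
    _ = ∑ i, c i ((fderiv ℝ A x (EuclideanSpace.single i 1)) (Ψ x)) := by
        rw [Finset.sum_add_distrib, add_assoc]
        have hz : (∑ i, σ • A x (c i (fderiv ℝ Ψ x (EuclideanSpace.single i 1))))
            + s • A x (∑ i, c i (fderiv ℝ Ψ x (EuclideanSpace.single i 1))) = 0 := by
          rw [← Finset.smul_sum, ← map_sum, ← add_smul, hsign, zero_smul]
        rw [hz, add_zero]
end
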